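/- arXiv:2010.02638 — 3 statements merged into one kernel-verified Lean document; each statement's English description precedes it below -/
import Mathlib

section
/- If a constant vector field c : ℝ² → ℝ² satisfies sym curl c = 0 for all of its rotated gradients trivially, then more generally: a smooth vector field v : ℝ² → ℝ² satisfies sym curl v = 0 if and only if v lies in the lowest-order Raviart–Thomas space RT = { (a + cx, b + cy) : a, b, c ∈ ℝ }. -/
/-- Partial derivative in the `x` direction of a scalar field on `ℝ²`. -/
noncomputable def pdx (f : ℝ × ℝ → ℝ) : ℝ × ℝ → ℝ := fun p => fderiv ℝ f p ((1 : ℝ), (0 : ℝ))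

/-- Partial derivative in the `y` direction of a scalar field on `ℝ²`. -/
noncomputable def pdy (f : ℝ × ℝ → ℝ) : ℝ × ℝ → ℝ := fun p => fderiv ℝ f p ((0 : ℝ), (1 : ℝ))

lemma sliceX (f : ℝ × ℝ → ℝ) (hf : Differentiable ℝ f) (x y : ℝ) :
    HasDerivAt (fun t => f (t, y)) (fderiv ℝ f (x, y) (1, 0)) x :=
  (hf (x, y)).hasFDerivAt.comp_hasDerivAt x ((hasDerivAt_id x).prodMk (hasDerivAt_const x y))

lemma sliceY (f : ℝ × ℝ → ℝ) (hf : Differentiable ℝ f) (x y : ℝ) :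
    HasDerivAt (fun t => f (x, t)) (fderiv ℝ f (x, y) (0, 1)) y :=
  (hf (x, y)).hasFDerivAt.comp_hasDerivAt y ((hasDerivAt_const y x).prodMk (hasDerivAt_id y))

lemma lin_of_deriv_const (f : ℝ → ℝ) (hf : Differentiable ℝ f) (c : ℝ)
    (h : ∀ x, deriv f x = c) : ∀ x, f x = f 0 + c * x := by
  intro x
  have hφ : Differentiable ℝ (fun t => f t - c * t) :=
    hf.sub (differentiable_id.const_mul c)
  have hd : ∀ t, deriv (fun t => f t - c * t) t = 0 := by
    intro t
    have h1 : HasDerivAt (fun t => f t - c * t) (deriv f t - c) t :=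
      (hf t).hasDerivAt.sub (by simpa using (hasDerivAt_id t).const_mul c)
    rw [h1.deriv, h t]; ring
  have := is_const_of_deriv_eq_zero hφ hd x 0
  simp at this; linarith

/-- A smooth vector field `v : ℝ² → ℝ²` satisfies `sym curl v = 0`
(entries `−∂ᵧv₁ = 0`, `(∂ₓv₁ − ∂ᵧv₂)/2 = 0`, `∂ₓv₂ = 0`) if and only if `v` lies in the
lowest-order Raviart–Thomas space `RT = { (a + cx, b + cy) : a, b, c ∈ ℝ }`. -/
theorem symcurl_eq_zero_iff_RT (v : ℝ × ℝ → ℝ × ℝ) (hv : ContDiff ℝ (⊤ : ℕ∞) v) :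
    (∀ p : ℝ × ℝ,
        -(pdy (fun s => (v s).1) p) = 0 ∧
        (pdx (fun s => (v s).1) p - pdy (fun s => (v s).2) p) / 2 = 0 ∧
        pdx (fun s => (v s).2) p = 0)
      ↔ ∃ a b c : ℝ, ∀ p : ℝ × ℝ, v p = (a + c * p.1, b + c * p.2) := by
  constructor
  · intro h
    set v1 : ℝ × ℝ → ℝ := fun s => (v s).1 with hv1def
    set v2 : ℝ × ℝ → ℝ := fun s => (v s).2 with hv2def
    have hd1 : Differentiable ℝ v1 := (hv.differentiable (by simp)).fst
    have hd2 : Differentiable ℝ v2 := (hv.differentiable (by simp)).snd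
    have hy1 : ∀ p : ℝ × ℝ, fderiv ℝ v1 p (0, 1) = 0 := by
      intro p; have := (h p).1; simpa [pdy] using this
    have hx2 : ∀ p : ℝ × ℝ, fderiv ℝ v2 p (1, 0) = 0 := by
      intro p; have := (h p).2.2; simpa [pdx] using this
    have heq : ∀ p : ℝ × ℝ, fderiv ℝ v1 p (1, 0) = fderiv ℝ v2 p (0, 1) := by
      intro p; have := (h p).2.1
      have h2 : pdx v1 p - pdy v2 p = 0 := by linarith
      simpa [pdx, pdy, sub_eq_zero] using h2
    -- v1 constant in y
    have hc1 : ∀ x y : ℝ, v1 (x, y) = v1 (x, 0) := by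
      intro x y
      have := is_const_of_deriv_eq_zero (f := fun t => v1 (x, t))
        (fun t => (sliceY v1 hd1 x t).differentiableAt)
        (fun t => by rw [(sliceY v1 hd1 x t).deriv]; exact hy1 (x, t)) y 0
      exact this
    have hc2 : ∀ x y : ℝ, v2 (x, y) = v2 (0, y) := by
      intro x y
      exact is_const_of_deriv_eq_zero (f := fun t => v2 (t, y))
        (fun t => (sliceX v2 hd2 t y).differentiableAt)
        (fun t => by rw [(sliceX v2 hd2 t y).deriv]; exact hx2 (t, y)) x 0
    set f : ℝ → ℝ := fun x => v1 (x, 0) with hfdef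
    set g : ℝ → ℝ := fun y => v2 (0, y) with hgdef
    have hdf : Differentiable ℝ f := fun x => (sliceX v1 hd1 x 0).differentiableAt
    have hdg : Differentiable ℝ g := fun y => (sliceY v2 hd2 0 y).differentiableAt
    have hfx : ∀ x y : ℝ, fderiv ℝ v1 (x, y) (1, 0) = deriv f x := by
      intro x y
      have h1 : (fun t => v1 (t, y)) = f := funext fun t => hc1 t y
      have := (sliceX v1 hd1 x y).deriv
      rw [h1] at this; exact this.symm
    have hgy : ∀ x y : ℝ, fderiv ℝ v2 (x, y) (0, 1) = deriv g y := by
      intro x y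
      have h1 : (fun t => v2 (x, t)) = g := funext fun t => hc2 x t
      have := (sliceY v2 hd2 x y).deriv
      rw [h1] at this; exact this.symm
    set c : ℝ := deriv g 0 with hcdef
    have hfc : ∀ x, deriv f x = c := by
      intro x
      have := heq (x, 0)
      rw [hfx x 0, hgy x 0] at this; exact this
    have hgc : ∀ y, deriv g y = c := by
      intro y
      have := heq (0, y)
      rw [hfx 0 y, hgy 0 y, hfc 0] at this; exact this.symm
    have hf := lin_of_deriv_const f hdf c hfc
    have hg := lin_of_deriv_const g hdg c hgc
    refine ⟨f 0, g 0, c, fun p => ?_⟩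
    have e1 : (v p).1 = f 0 + c * p.1 := by
      have : v1 (p.1, p.2) = f p.1 := hc1 p.1 p.2
      simpa [hv1def] using this.trans (hf p.1)
    have e2 : (v p).2 = g 0 + c * p.2 := by
      have : v2 (p.1, p.2) = g p.2 := hc2 p.1 p.2
      simpa [hv2def] using this.trans (hg p.2)
    exact Prod.ext e1 e2
  · rintro ⟨a, b, c, hlin⟩ p
    have hv' : v = fun q => (a + c * q.1, b + c * q.2) := funext hlin
    subst hv'
    have h1 : HasFDerivAt (fun s : ℝ × ℝ => a + c * s.1)
        (c • ContinuousLinearMap.fst ℝ ℝ ℝ) p :=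
      (hasFDerivAt_fst.const_mul c).const_add a
    have h2 : HasFDerivAt (fun s : ℝ × ℝ => b + c * s.2)
        (c • ContinuousLinearMap.snd ℝ ℝ ℝ) p :=
      (hasFDerivAt_snd.const_mul c).const_add b
    refine ⟨?_, ?_, ?_⟩
    · simp [pdy, h1.fderiv]
    · simp [pdx, pdy, h1.fderiv, h2.fderiv]
    · simp [pdx, h2.fderiv]
end

section
/- Let K be a triangle with barycentric coordinates λ₁, λ₂, λ₃. If ψ ∈ P_k(K;ℝ²) satisfies div ψ = 0 on K and ψ·n = 0 on ∂K, then there exists q ∈ λ₁λ₂λ₃ P_{k−2}(K) with ψ = curl q, where curl q = (−∂ᵧq, ∂ₓq). -/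
open MvPolynomial


lemma eval_aeval_poly (f : Fin 2 → Polynomial ℝ) (t : ℝ) (p : MvPolynomial (Fin 2) ℝ) :
    Polynomial.eval t (aeval f p) = eval (fun i => Polynomial.eval t (f i)) p := by
  induction p using MvPolynomial.induction_on with
  | C a => simp
  | add p q hp hq => simp [hp, hq]
  | mul_X p i hp => simp [hp]

lemma eval_aeval_mv (g : Fin 2 → MvPolynomial (Fin 2) ℝ) (x : Fin 2 → ℝ)
    (p : MvPolynomial (Fin 2) ℝ) :
    eval x (aeval g p) = eval (fun i => eval x (g i)) p := by
  induction p using MvPolynomial.induction_on with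
  | C a => simp
  | add p q hp hq => simp only [map_add, hp, hq]
  | mul_X p i hp => simp only [map_mul, aeval_X, hp, eval_X]

lemma vanish_box (p : MvPolynomial (Fin 2) ℝ) (z : Fin 2 → ℝ) (ε : ℝ) (hε : 0 < ε)
    (h : ∀ x : Fin 2 → ℝ, (∀ i, |x i - z i| < ε) → eval x p = 0) : p = 0 := by
  have key1 : ∀ y ∈ Set.Ioo (z 1 - ε) (z 1 + ε), ∀ t : ℝ,
      eval (fun i => if i = 0 then t else y) p = 0 := by
    intro y hy t
    have hy' : |y - z 1| < ε := abs_lt.2 ⟨by linarith [hy.1], by linarith [hy.2]⟩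
    have h0 : aeval ![Polynomial.X, Polynomial.C y] p = 0 := by
      apply Polynomial.eq_zero_of_infinite_isRoot
      apply Set.Infinite.mono (s := Set.Ioo (z 0 - ε) (z 0 + ε))
      · intro s hs
        have hs' : |s - z 0| < ε := abs_lt.2 ⟨by linarith [hs.1], by linarith [hs.2]⟩
        simp only [Set.mem_setOf_eq, Polynomial.IsRoot, eval_aeval_poly]
        have e : (fun i => Polynomial.eval s (![Polynomial.X, Polynomial.C y] i))
            = fun i : Fin 2 => if i = 0 then s else y := by
          funext i; fin_cases i <;> simp
        rw [e]
        apply h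
        intro i; fin_cases i <;> simpa using (by assumption : _)
      · exact Set.Ioo_infinite (by linarith)
    have h1 := congrArg (Polynomial.eval t) h0
    rw [eval_aeval_poly] at h1
    have e : (fun i => Polynomial.eval t (![Polynomial.X, Polynomial.C y] i))
        = fun i : Fin 2 => if i = 0 then t else y := by
      funext i; fin_cases i <;> simp
    rw [e] at h1; simpa using h1
  have key2 : ∀ t y : ℝ, eval (fun i => if i = 0 then t else y) p = 0 := by
    intro t y
    have h0 : aeval ![Polynomial.C t, Polynomial.X] p = 0 := by
      apply Polynomial.eq_zero_of_infinite_isRoot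
      apply Set.Infinite.mono (s := Set.Ioo (z 1 - ε) (z 1 + ε))
      · intro s hs
        simp only [Set.mem_setOf_eq, Polynomial.IsRoot, eval_aeval_poly]
        have e : (fun i => Polynomial.eval s (![Polynomial.C t, Polynomial.X] i))
            = fun i : Fin 2 => if i = 0 then t else s := by
          funext i; fin_cases i <;> simp
        rw [e]
        exact key1 s hs t
      · exact Set.Ioo_infinite (by linarith)
    have h1 := congrArg (Polynomial.eval y) h0
    rw [eval_aeval_poly] at h1
    have e : (fun i => Polynomial.eval y (![Polynomial.C t, Polynomial.X] i))
        = fun i : Fin 2 => if i = 0 then t else y := by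
      funext i; fin_cases i <;> simp
    rw [e] at h1; simpa using h1
  apply MvPolynomial.funext (q := 0)
  intro x
  rw [map_zero]
  have e : x = fun i : Fin 2 => if i = 0 then x 0 else x 1 := by
    funext i; fin_cases i <;> simp
  calc eval x p = eval (fun i : Fin 2 => if i = 0 then x 0 else x 1) p := by rw [← e]
  _ = 0 := key2 _ _


lemma coeff_pderiv' (i : Fin 2) (p : MvPolynomial (Fin 2) ℝ) (e : Fin 2 →₀ ℕ) :
    coeff e (pderiv i p) = coeff (e + Finsupp.single i 1) p * ((e i : ℝ) + 1) := by
  induction p using MvPolynomial.induction_on' with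
  | monomial u a =>
    rw [pderiv_monomial, coeff_monomial, coeff_monomial]
    by_cases hui : u i = 0
    · have h1 : u - Finsupp.single i 1 = u := by
        ext j
        rw [Finsupp.tsub_apply]
        rcases eq_or_ne j i with rfl | hj
        · simp [hui]
        · simp [Finsupp.single_apply, Ne.symm hj]
      have h2 : u ≠ e + Finsupp.single i 1 := by
        intro hcontra
        have h5 := DFunLike.congr_fun hcontra i
        rw [Finsupp.add_apply, Finsupp.single_eq_same] at h5
        omega
      rw [h1, if_neg h2]
      by_cases he : u = e
      · subst he; simp [hui]
      · simp [he]
    · have hle : Finsupp.single i 1 ≤ u := by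
        rw [Finsupp.single_le_iff]; omega
      by_cases heq : u = e + Finsupp.single i 1
      · have h1 : u - Finsupp.single i 1 = e := by rw [heq, add_tsub_cancel_right]
        rw [if_pos h1, if_pos heq]
        have h6 : u i = e i + 1 := by
          rw [heq, Finsupp.add_apply, Finsupp.single_eq_same]
        rw [h6]; push_cast; ring
      · have h1 : u - Finsupp.single i 1 ≠ e := by
          intro hcontra
          apply heq
          rw [← hcontra, tsub_add_cancel_of_le hle]
        rw [if_neg h1, if_neg heq, zero_mul]
  | add p q hp hq => simp [hp, hq]; ring

lemma pderiv_comm' (p : MvPolynomial (Fin 2) ℝ) :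
    pderiv 0 (pderiv 1 p) = pderiv 1 (pderiv 0 p) := by
  apply MvPolynomial.ext
  intro e
  rw [coeff_pderiv', coeff_pderiv', coeff_pderiv', coeff_pderiv']
  have h1 : e + Finsupp.single 0 1 + Finsupp.single 1 1
      = e + Finsupp.single 1 1 + Finsupp.single 0 1 := by
    rw [add_assoc, add_assoc, add_comm (Finsupp.single 0 1)]
  rw [h1]
  simp only [Finsupp.add_apply, Finsupp.single_eq_same,
    Finsupp.single_eq_of_ne (by decide : (0:Fin 2) ≠ 1),
    Finsupp.single_eq_of_ne (by decide : (1:Fin 2) ≠ 0)]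
  push_cast; ring

noncomputable def integ (i : Fin 2) (p : MvPolynomial (Fin 2) ℝ) : MvPolynomial (Fin 2) ℝ :=
  p.support.sum fun d => monomial (d + Finsupp.single i 1) (coeff d p / ((d i : ℝ) + 1))

lemma pderiv_integ (i : Fin 2) (p : MvPolynomial (Fin 2) ℝ) : pderiv i (integ i p) = p := by
  rw [integ, map_sum]
  have key : ∀ d ∈ p.support,
      pderiv i (monomial (d + Finsupp.single i 1) (coeff d p / ((d i : ℝ) + 1)))
      = monomial d (coeff d p) := by
    intro d _
    rw [pderiv_monomial, add_tsub_cancel_right]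
    congr 1
    rw [Finsupp.add_apply, Finsupp.single_eq_same]
    have hne : ((d i : ℝ) + 1) ≠ 0 := by positivity
    push_cast
    field_simp
  rw [Finset.sum_congr rfl key, support_sum_monomial_coeff]

lemma totalDegree_integ (i : Fin 2) (p : MvPolynomial (Fin 2) ℝ) :
    (integ i p).totalDegree ≤ p.totalDegree + 1 := by
  refine (totalDegree_finset_sum _ _).trans (Finset.sup_le fun d hd => ?_)
  refine (totalDegree_monomial_le _ _).trans ?_
  simp only [Function.id_def]
  have h2 : ((d + Finsupp.single i 1).sum fun _ e => e) = (d.sum fun _ e => e) + 1 := by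
    rw [Finsupp.sum_add_index (by simp) (by simp)]
    simp
  rw [h2]
  exact Nat.add_le_add_right (le_totalDegree hd) 1

lemma totalDegree_pderiv_le (i : Fin 2) (p : MvPolynomial (Fin 2) ℝ) :
    (pderiv i p).totalDegree ≤ p.totalDegree - 1 := by
  conv_lhs => rw [← support_sum_monomial_coeff p, map_sum]
  refine (totalDegree_finset_sum _ _).trans (Finset.sup_le fun d hd => ?_)
  rw [pderiv_monomial]
  by_cases hdi : d i = 0
  · have h0 : (coeff d p * (d i : ℝ)) = 0 := by simp [hdi]
    simp [h0]
  · refine (totalDegree_monomial_le _ _).trans ?_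
    simp only [Function.id_def]
    have h1 : ∀ d' : Fin 2 →₀ ℕ, (d'.sum fun _ e => e) = d' 0 + d' 1 := by
      intro d'
      rw [Finsupp.sum_fintype _ _ (by simp)]
      exact Fin.sum_univ_two _
    have h3 := le_totalDegree hd
    rw [h1] at h3 ⊢
    rw [Finsupp.tsub_apply, Finsupp.tsub_apply]
    have h4 : d i ≥ 1 := by omega
    have h5 : Finsupp.single i 1 0 + Finsupp.single i 1 1 = 1 := by
      fin_cases i <;> simp
    have h6 : Finsupp.single i 1 0 ≤ d 0 ∧ Finsupp.single i 1 1 ≤ d 1 := by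
      constructor <;> (rw [Finsupp.single_apply]; split <;> simp_all) <;> omega
    omega

lemma support_pderiv_zero (i : Fin 2) (p : MvPolynomial (Fin 2) ℝ)
    (h : pderiv i p = 0) : ∀ d ∈ p.support, d i = 0 := by
  intro d hd
  by_contra hne
  have hle : Finsupp.single i 1 ≤ d := by rw [Finsupp.single_le_iff]; omega
  have h1 := coeff_pderiv' i p (d - Finsupp.single i 1)
  rw [h, tsub_add_cancel_of_le hle, coeff_zero] at h1
  have h2 : coeff d p ≠ 0 := mem_support_iff.mp hd
  have h3 : (((d - Finsupp.single i 1 : Fin 2 →₀ ℕ) i : ℝ) + 1) ≠ 0 := by positivity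
  rcases mul_eq_zero.mp h1.symm with h' | h'
  · exact h2 h'
  · exact h3 h'

lemma pderiv_integ_zero (i j : Fin 2) (hij : i ≠ j) (p : MvPolynomial (Fin 2) ℝ)
    (h : ∀ d ∈ p.support, d j = 0) : pderiv j (integ i p) = 0 := by
  rw [integ, map_sum]
  apply Finset.sum_eq_zero
  intro d hd
  rw [pderiv_monomial]
  have h0 : (d + Finsupp.single i 1 : Fin 2 →₀ ℕ) j = 0 := by
    rw [Finsupp.add_apply, Finsupp.single_eq_of_ne' hij, h d hd]; ring
  rw [h0]
  simp


lemma deriv_aeval (f : Fin 2 → Polynomial ℝ) (p : MvPolynomial (Fin 2) ℝ) :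
    Polynomial.derivative (aeval f p) =
      aeval f (pderiv 0 p) * Polynomial.derivative (f 0)
      + aeval f (pderiv 1 p) * Polynomial.derivative (f 1) := by
  induction p using MvPolynomial.induction_on with
  | C a => simp
  | add p q hp hq => simp only [map_add, hp, hq]; ring
  | mul_X p i hp =>
    fin_cases i <;>
      simp [map_mul, aeval_X, Polynomial.derivative_mul, hp, pderiv_mul,
        pderiv_X_self, pderiv_X_of_ne (by decide : (0:Fin 2) ≠ 1),
        pderiv_X_of_ne (by decide : (1:Fin 2) ≠ 0)] <;> ring

lemma fin2_sum (d : Fin 2 →₀ ℕ) : (d.sum fun _ e => e) = d 0 + d 1 := by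
  rw [Finsupp.sum_fintype _ _ (by simp)]
  exact Fin.sum_univ_two _

lemma fin2_sum' (d : Fin 2 →₀ ℕ) : (∑ i ∈ d.support, d i) = d 0 + d 1 :=
  fin2_sum d

lemma affine_rep (l : MvPolynomial (Fin 2) ℝ) (hd : l.totalDegree ≤ 1) :
    l = C (coeff 0 l) + C (coeff (Finsupp.single 0 1) l) * X 0
      + C (coeff (Finsupp.single 1 1) l) * X 1 := by
  apply MvPolynomial.ext
  intro d
  have classify : d = 0 ∨ d = Finsupp.single 0 1 ∨ d = Finsupp.single 1 1
      ∨ 2 ≤ d 0 + d 1 := by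
    by_cases h2 : 2 ≤ d 0 + d 1
    · exact Or.inr (Or.inr (Or.inr h2))
    · push_neg at h2
      have hall : ∀ j : Fin 2, d j = (if d 0 = 1 then Finsupp.single (0:Fin 2) 1 j
          else if d 1 = 1 then Finsupp.single (1:Fin 2) 1 j else 0) := by
        intro j
        fin_cases j <;> rcases (by omega : d 0 = 0 ∧ d 1 = 0 ∨ d 0 = 1 ∧ d 1 = 0
            ∨ d 0 = 0 ∧ d 1 = 1) with ⟨ha, hb⟩ | ⟨ha, hb⟩ | ⟨ha, hb⟩ <;>
          simp [ha, hb, Finsupp.single_apply]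
      rcases (by omega : d 0 = 0 ∧ d 1 = 0 ∨ d 0 = 1 ∧ d 1 = 0 ∨ d 0 = 0 ∧ d 1 = 1)
          with ⟨ha, hb⟩ | ⟨ha, hb⟩ | ⟨ha, hb⟩
      · left; ext j; rw [hall j]; simp [ha, hb]
      · right; left; ext j; rw [hall j]; simp [ha, hb]
      · right; right; left; ext j; rw [hall j]; simp [ha, hb]
  rcases classify with rfl | rfl | rfl | h2
  · have h01 : ¬((0 : Fin 2 →₀ ℕ) = Finsupp.single (0 : Fin 2) 1) := by
      rw [eq_comm, Finsupp.single_eq_zero]; exact one_ne_zero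
    have h02 : ¬((0 : Fin 2 →₀ ℕ) = Finsupp.single (1 : Fin 2) 1) := by
      rw [eq_comm, Finsupp.single_eq_zero]; exact one_ne_zero
    simp [coeff_C, coeff_X', h01, h02, fun h => h01 (Eq.symm h), fun h => h02 (Eq.symm h)]
  · have h01 : ¬((0 : Fin 2 →₀ ℕ) = Finsupp.single (0 : Fin 2) 1) := by
      rw [eq_comm, Finsupp.single_eq_zero]; exact one_ne_zero
    have h12 : ¬(Finsupp.single (1 : Fin 2) 1 = Finsupp.single (0 : Fin 2) 1) := by
      rw [Finsupp.single_eq_single_iff]; push_neg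
      exact ⟨fun h => absurd h (by decide), fun h => absurd h one_ne_zero⟩
    simp [coeff_C, coeff_X', h01, h12, fun h => h01 (Eq.symm h)]
  · have h02 : ¬((0 : Fin 2 →₀ ℕ) = Finsupp.single (1 : Fin 2) 1) := by
      rw [eq_comm, Finsupp.single_eq_zero]; exact one_ne_zero
    have h21 : ¬(Finsupp.single (0 : Fin 2) 1 = Finsupp.single (1 : Fin 2) 1) := by
      rw [Finsupp.single_eq_single_iff]; push_neg
      exact ⟨fun h => absurd h (by decide), fun h => absurd h one_ne_zero⟩
    simp [coeff_C, coeff_X', h02, h21, fun h => h02 (Eq.symm h)]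
  · have e0 : (0 : Fin 2 →₀ ℕ) ≠ d := by
      intro hh
      have g0 := DFunLike.congr_fun hh 0
      have g1 := DFunLike.congr_fun hh 1
      simp at g0 g1
      omega
    have e1 : Finsupp.single (0 : Fin 2) 1 ≠ d := by
      intro hh
      have g0 := DFunLike.congr_fun hh 0
      have g1 := DFunLike.congr_fun hh 1
      simp [Finsupp.single_apply] at g0 g1
      omega
    have e2 : Finsupp.single (1 : Fin 2) 1 ≠ d := by
      intro hh
      have g0 := DFunLike.congr_fun hh 0
      have g1 := DFunLike.congr_fun hh 1
      simp [Finsupp.single_apply] at g0 g1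
      omega
    have hlhs : coeff d l = 0 := by
      apply coeff_eq_zero_of_totalDegree_lt
      rw [fin2_sum']
      omega
    rw [hlhs]
    simp [coeff_C, coeff_X', e0, e1, e2]

noncomputable def zv : Fin 2 → MvPolynomial (Fin 2) ℝ := ![0, X 1]
lemma zv0 : zv 0 = 0 := rfl
lemma zv1 : zv 1 = X 1 := rfl

/-- vanishing on the axis x₀ = 0 implies divisibility by X 0 -/
lemma X0_dvd_of_vanish (P : MvPolynomial (Fin 2) ℝ)
    (h : ∀ x : Fin 2 → ℝ, x 0 = 0 → eval x P = 0) : X 0 ∣ P := by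
  have key : ∀ Q : MvPolynomial (Fin 2) ℝ, X 0 ∣ Q - aeval zv Q := by
    intro Q
    induction Q using MvPolynomial.induction_on with
    | C a => simp
    | add p q hp hq =>
      have e : p + q - aeval zv (p + q)
          = (p - aeval zv p) + (q - aeval zv q) := by
        rw [map_add]; ring
      rw [e]; exact dvd_add hp hq
    | mul_X p i hp =>
      rw [map_mul, aeval_X]
      fin_cases i
      · show X 0 ∣ p * X 0 - aeval zv p * zv 0
        rw [zv0, mul_zero, sub_zero]
        exact Dvd.intro p (mul_comm (X 0) p)
      · show X 0 ∣ p * X 1 - aeval zv p * zv 1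
        rw [zv1]
        have e : p * X 1 - aeval zv p * X 1 = (p - aeval zv p) * X 1 := by ring
        rw [e]
        exact Dvd.dvd.mul_right hp _
  have hB : aeval zv P = 0 := by
    apply MvPolynomial.funext (q := 0)
    intro x
    rw [eval_aeval_mv, map_zero]
    apply h
    rw [zv0, map_zero]
  have h9 := key P
  rwa [hB, sub_zero] at h9

noncomputable def gv (a b c : ℝ) : Fin 2 → MvPolynomial (Fin 2) ℝ :=
  ![C c + C a * X 0 + C b * X 1, X 1]
noncomputable def fv (a b c : ℝ) : Fin 2 → MvPolynomial (Fin 2) ℝ :=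
  ![C a⁻¹ * (X 0 - C b * X 1 - C c), X 1]
noncomputable def sw : Fin 2 → MvPolynomial (Fin 2) ℝ := ![X 1, X 0]

lemma gv0 (a b c : ℝ) : gv a b c 0 = C c + C a * X 0 + C b * X 1 := rfl
lemma gv1 (a b c : ℝ) : gv a b c 1 = X 1 := rfl
lemma fv0 (a b c : ℝ) : fv a b c 0 = C a⁻¹ * (X 0 - C b * X 1 - C c) := rfl
lemma fv1 (a b c : ℝ) : fv a b c 1 = X 1 := rfl
lemma sw0 : sw 0 = X 1 := rfl
lemma sw1 : sw 1 = X 0 := rfl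

/-- main divisibility lemma, case a ≠ 0 -/
lemma lin_dvd_aux (a b c : ℝ) (ha : a ≠ 0) (p : MvPolynomial (Fin 2) ℝ)
    (h : ∀ x : Fin 2 → ℝ, a * x 0 + b * x 1 + c = 0 → eval x p = 0) :
    (C c + C a * X 0 + C b * X 1) ∣ p := by
  have hgf : ∀ q : MvPolynomial (Fin 2) ℝ, aeval (gv a b c) (aeval (fv a b c) q) = q := by
    have e0 : aeval (gv a b c) (fv a b c 0) = X 0 := by
      rw [fv0]
      simp only [map_mul, map_sub, aeval_X, aeval_C, MvPolynomial.algebraMap_eq, gv0, gv1]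
      rw [show (C c : MvPolynomial (Fin 2) ℝ) + C a * X 0 + C b * X 1 - C b * X 1 - C c
          = C a * X 0 by ring, ← mul_assoc, ← C_mul, inv_mul_cancel₀ ha, C_1, one_mul]
    have e1 : aeval (gv a b c) (fv a b c 1) = X 1 := by
      rw [fv1, aeval_X, gv1]
    intro q
    induction q using MvPolynomial.induction_on with
    | C r => simp
    | add p q hp hq => simp only [map_add, hp, hq]
    | mul_X p i hp =>
      rw [map_mul, map_mul, hp, aeval_X]
      congr 1
      fin_cases i
      · exact e0
      · exact e1
  have hvan : ∀ x : Fin 2 → ℝ, x 0 = 0 → eval x (aeval (fv a b c) p) = 0 := by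
    intro x hx0
    rw [eval_aeval_mv]
    apply h
    have e0 : eval x (fv a b c 0) = a⁻¹ * (x 0 - b * x 1 - c) := by
      rw [fv0]; simp
    have e1 : eval x (fv a b c 1) = x 1 := by rw [fv1]; simp
    rw [e0, e1, hx0]
    field_simp
    ring
  obtain ⟨t, ht⟩ := X0_dvd_of_vanish _ hvan
  refine ⟨aeval (gv a b c) t, ?_⟩
  have h2 := congrArg (aeval (gv a b c)) ht
  rw [hgf, map_mul, aeval_X, gv0] at h2
  exact h2

lemma lin_dvd (a b c : ℝ) (hab : a ≠ 0 ∨ b ≠ 0) (p : MvPolynomial (Fin 2) ℝ)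
    (h : ∀ x : Fin 2 → ℝ, a * x 0 + b * x 1 + c = 0 → eval x p = 0) :
    (C c + C a * X 0 + C b * X 1) ∣ p := by
  rcases hab with ha | hb
  · exact lin_dvd_aux a b c ha p h
  by_cases ha : a ≠ 0
  · exact lin_dvd_aux a b c ha p h
  push_neg at ha
  subst ha
  have hww : ∀ q : MvPolynomial (Fin 2) ℝ, aeval sw (aeval sw q) = q := by
    intro q
    induction q using MvPolynomial.induction_on with
    | C r => simp
    | add p q hp hq => simp only [map_add, hp, hq]
    | mul_X p i hp =>
      rw [map_mul, map_mul, hp, aeval_X]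
      congr 1
      fin_cases i
      · show aeval sw (sw 0) = X 0
        rw [sw0, aeval_X, sw1]
      · show aeval sw (sw 1) = X 1
        rw [sw1, aeval_X, sw0]
  have hvan : ∀ x : Fin 2 → ℝ, b * x 0 + 0 * x 1 + c = 0 → eval x (aeval sw p) = 0 := by
    intro x hx
    rw [eval_aeval_mv]
    apply h
    have e0 : eval x (sw 0) = x 1 := by rw [sw0]; simp
    have e1 : eval x (sw 1) = x 0 := by rw [sw1]; simp
    rw [e0, e1]
    linarith
  obtain ⟨t, ht⟩ := lin_dvd_aux b 0 c hb _ hvan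
  refine ⟨aeval sw t, ?_⟩
  have h2 := congrArg (aeval sw) ht
  rw [hww, map_mul] at h2
  rw [h2]
  congr 1
  rw [map_add, map_add, map_mul, map_mul, aeval_C, aeval_C, aeval_C, aeval_X, aeval_X,
    MvPolynomial.algebraMap_eq, sw0, sw1, C_0]
  ring


noncomputable def homz : MvPolynomial (Fin 2) ℝ →ₐ[ℝ] Polynomial (MvPolynomial (Fin 2) ℝ) :=
  aeval (fun i => Polynomial.C (X i) * Polynomial.X)

lemma homz_coeff (p : MvPolynomial (Fin 2) ℝ) (m : ℕ) :
    (homz p).coeff m = homogeneousComponent m p := by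
  induction p using MvPolynomial.induction_on' with
  | monomial u a =>
    have h1 : homz (monomial u a) = Polynomial.C (monomial u a) * Polynomial.X ^ (u 0 + u 1) := by
      rw [homz, aeval_monomial]
      have h2 : (u.prod fun i e => (Polynomial.C (X i : MvPolynomial (Fin 2) ℝ)
          * Polynomial.X) ^ e)
          = Polynomial.C (u.prod fun i e => (X i) ^ e) * Polynomial.X ^ (u 0 + u 1) := by
        rw [Finsupp.prod_fintype _ _ (by simp), Finsupp.prod_fintype _ _ (by simp)]
        rw [Fin.prod_univ_two, Fin.prod_univ_two]
        rw [mul_pow, mul_pow, map_mul, map_pow, map_pow]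
        ring
      rw [h2]
      have h4 : (algebraMap ℝ (Polynomial (MvPolynomial (Fin 2) ℝ))) a
          = Polynomial.C (C a) := by
        simp [Polynomial.algebraMap_apply, MvPolynomial.algebraMap_eq]
      rw [h4, ← mul_assoc, ← Polynomial.C_mul]
      congr 2
      rw [monomial_eq]
    rw [h1]
    rw [Polynomial.coeff_C_mul, Polynomial.coeff_X_pow]
    have h3 : homogeneousComponent m (monomial u a)
        = if m = u 0 + u 1 then monomial u a else 0 := by
      have hmem : monomial u a ∈ homogeneousSubmodule (Fin 2) ℝ (u 0 + u 1) := by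
        rw [mem_homogeneousSubmodule]
        apply isHomogeneous_monomial
        rw [Finsupp.degree_apply]
        rw [show (∑ i ∈ u.support, u i) = u.sum fun _ e => e from rfl, fin2_sum]
      exact homogeneousComponent_of_mem hmem
    rw [h3]
    split <;> simp
  | add p q hp hq => simp [hp, hq]

lemma homz_ne_zero (p : MvPolynomial (Fin 2) ℝ) (hp : p ≠ 0) :
    homz p ≠ 0 ∧ (homz p).natDegree = p.totalDegree := by
  have htop : homogeneousComponent p.totalDegree p ≠ 0 := by
    obtain ⟨d, hd, hdeg⟩ : ∃ d ∈ p.support, (d.sum fun _ e => e) = p.totalDegree := by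
      have hne : p.support.Nonempty := by
        rw [Finset.nonempty_iff_ne_empty]
        intro hcon
        exact hp (support_eq_empty.mp hcon)
      obtain ⟨d, hd, he⟩ := Finset.exists_mem_eq_sup p.support hne
          (fun d => d.sum fun _ e => e)
      exact ⟨d, hd, he.symm⟩
    intro hcon
    have := congrArg (coeff d) hcon
    rw [coeff_homogeneousComponent, coeff_zero] at this
    rw [Finsupp.degree_apply, show (∑ i ∈ d.support, d i) = d.sum fun _ e => e from rfl,
      hdeg] at this
    rw [if_pos rfl] at this
    exact mem_support_iff.mp hd this
  have hc : (homz p).coeff p.totalDegree ≠ 0 := by rw [homz_coeff]; exact htop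
  have hne : homz p ≠ 0 := fun hcon => hc (by rw [hcon, Polynomial.coeff_zero])
  refine ⟨hne, le_antisymm ?_ (Polynomial.le_natDegree_of_ne_zero hc)⟩
  apply Polynomial.natDegree_le_iff_coeff_eq_zero.mpr
  intro m hm
  rw [homz_coeff]
  exact homogeneousComponent_eq_zero _ _ hm

lemma totalDegree_mul_eq' (p q : MvPolynomial (Fin 2) ℝ) (hp : p ≠ 0) (hq : q ≠ 0) :
    (p * q).totalDegree = p.totalDegree + q.totalDegree := by
  obtain ⟨hp1, hp2⟩ := homz_ne_zero p hp
  obtain ⟨hq1, hq2⟩ := homz_ne_zero q hq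
  have hpq : p * q ≠ 0 := mul_ne_zero hp hq
  obtain ⟨h1, h2⟩ := homz_ne_zero (p * q) hpq
  rw [← h2, map_mul, Polynomial.natDegree_mul hp1 hq1, hp2, hq2]

lemma eq_C_of_totalDegree_zero (p : MvPolynomial (Fin 2) ℝ) (hp : p.totalDegree = 0) :
    p = C (coeff 0 p) := by
  have h := affine_rep p (by omega)
  have h0 : coeff (Finsupp.single (0 : Fin 2) 1) p = 0 := by
    apply coeff_eq_zero_of_totalDegree_lt
    rw [fin2_sum', hp]
    simp
  have h1 : coeff (Finsupp.single (1 : Fin 2) 1) p = 0 := by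
    apply coeff_eq_zero_of_totalDegree_lt
    rw [fin2_sum', hp]
    simp [Finsupp.single_apply]
  rw [h0, h1] at h
  simpa using h

lemma affine_irreducible (l : MvPolynomial (Fin 2) ℝ) (hdeg : l.totalDegree = 1) :
    Irreducible l := by
  have hl0 : l ≠ 0 := fun hcon => by simp [hcon] at hdeg
  constructor
  · intro ⟨u, hu⟩
    have h1 : (l * ↑u⁻¹ : MvPolynomial (Fin 2) ℝ) = 1 := by
      rw [← hu]; exact Units.mul_inv u
    have hu0 : (↑u⁻¹ : MvPolynomial (Fin 2) ℝ) ≠ 0 := Units.ne_zero _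
    have := totalDegree_mul_eq' l _ hl0 hu0
    rw [h1] at this
    simp [hdeg] at this
    omega
  · intro f g hfg
    have hf0 : f ≠ 0 := fun hcon => hl0 (by rw [hfg, hcon, zero_mul])
    have hg0 : g ≠ 0 := fun hcon => hl0 (by rw [hfg, hcon, mul_zero])
    have hadd := totalDegree_mul_eq' f g hf0 hg0
    rw [← hfg, hdeg] at hadd
    rcases (by omega : f.totalDegree = 0 ∨ g.totalDegree = 0) with h0 | h0
    · left
      have hC := eq_C_of_totalDegree_zero f h0
      have hcne : coeff 0 f ≠ 0 := fun hcon => hf0 (by rw [hC, hcon, C_0])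
      rw [hC]
      exact IsUnit.of_mul_eq_one (C (coeff 0 f)⁻¹)
        (by rw [← C_mul, mul_inv_cancel₀ hcne, C_1])
    · right
      have hC := eq_C_of_totalDegree_zero g h0
      have hcne : coeff 0 g ≠ 0 := fun hcon => hg0 (by rw [hC, hcon, C_0])
      rw [hC]
      exact IsUnit.of_mul_eq_one (C (coeff 0 g)⁻¹)
        (by rw [← C_mul, mul_inv_cancel₀ hcne, C_1])

lemma affine_prime (l : MvPolynomial (Fin 2) ℝ) (hdeg : l.totalDegree = 1) :
    Prime l :=
  (UniqueFactorizationMonoid.irreducible_iff_prime).mp (affine_irreducible l hdeg)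


lemma solve2 (α β u0 u1 w0 w1 : ℝ) (hab : α ≠ 0 ∨ β ≠ 0)
    (hu : α * u0 + β * u1 = 0) (hw : α * w0 + β * w1 = 0)
    (hwne : w0 ≠ 0 ∨ w1 ≠ 0) : ∃ s : ℝ, u0 = s * w0 ∧ u1 = s * w1 := by
  rcases hab with hα | hβ
  · have hw1 : w1 ≠ 0 := by
      intro hcon
      have : w0 = 0 := by
        have h1 : α * w0 = 0 := by rw [hcon] at hw; linarith
        exact (mul_eq_zero.mp h1).resolve_left hα
      rcases hwne with h | h <;> [exact h this; exact h hcon]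
    refine ⟨u1 / w1, ?_, by field_simp⟩
    have key : α * (u0 * w1) = α * (u1 * w0) := by linear_combination w1 * hu - u1 * hw
    have h2 := mul_left_cancel₀ hα key
    field_simp
    linarith
  · have hw0 : w0 ≠ 0 := by
      intro hcon
      have : w1 = 0 := by
        have h1 : β * w1 = 0 := by rw [hcon] at hw; linarith
        exact (mul_eq_zero.mp h1).resolve_left hβ
      rcases hwne with h | h <;> [exact h hcon; exact h this]
    refine ⟨u0 / w0, by field_simp, ?_⟩
    have key : β * (u1 * w0) = β * (u0 * w1) := by linear_combination w0 * hu - u0 * hw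
    have h2 := mul_left_cancel₀ hβ key
    field_simp
    linarith

/-- if an affine `l` vanishes at two distinct points and `Q` vanishes on the line
through them, then `l` divides `Q` -/
lemma dvd_line (l : MvPolynomial (Fin 2) ℝ) (hd : l.totalDegree ≤ 1)
    (a b w : Fin 2 → ℝ) (hla : eval a l = 0) (hlb : eval b l = 0)
    (hlw : eval w l = 1) (hab : a ≠ b) (Q : MvPolynomial (Fin 2) ℝ)
    (hQ : ∀ t : ℝ, eval (fun i => a i + t * (b i - a i)) Q = 0) : l ∣ Q := by
  have hrep := affine_rep l hd
  set γ := coeff 0 l with hγ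
  set α := coeff (Finsupp.single (0 : Fin 2) 1) l with hα
  set β := coeff (Finsupp.single (1 : Fin 2) 1) l with hβ
  have heval : ∀ x : Fin 2 → ℝ, eval x l = γ + α * x 0 + β * x 1 := by
    intro x
    conv_lhs => rw [hrep]
    simp
  have hαβ : α ≠ 0 ∨ β ≠ 0 := by
    by_contra hcon
    push_neg at hcon
    obtain ⟨ha0, hb0⟩ := hcon
    have h1 : eval a l = γ := by rw [heval, ha0, hb0]; ring
    have h2 : eval w l = γ := by rw [heval, ha0, hb0]; ring
    rw [hla] at h1
    rw [hlw] at h2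
    linarith
  have hvanish : ∀ x : Fin 2 → ℝ, α * x 0 + β * x 1 + γ = 0 → eval x Q = 0 := by
    intro x hx
    have hv2 : α * a 0 + β * a 1 + γ = 0 := by
      have := heval a
      rw [hla] at this
      linarith
    have hv3 : α * b 0 + β * b 1 + γ = 0 := by
      have := heval b
      rw [hlb] at this
      linarith
    have hu : α * (x 0 - a 0) + β * (x 1 - a 1) = 0 := by linear_combination hx - hv2
    have hw : α * (b 0 - a 0) + β * (b 1 - a 1) = 0 := by linear_combination hv3 - hv2
    have hwne : (b 0 - a 0) ≠ 0 ∨ (b 1 - a 1) ≠ 0 := by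
      by_contra hcon
      push_neg at hcon
      obtain ⟨h0, h1⟩ := hcon
      apply hab
      funext i
      fin_cases i
      · show a 0 = b 0; linarith
      · show a 1 = b 1; linarith
    obtain ⟨s, hs0, hs1⟩ := solve2 α β _ _ _ _ hαβ hu hw hwne
    have hx' : x = fun i => a i + s * (b i - a i) := by
      funext i
      fin_cases i
      · show x 0 = a 0 + s * (b 0 - a 0); linarith
      · show x 1 = a 1 + s * (b 1 - a 1); linarith
    rw [hx']
    exact hQ s
  have hdvd := lin_dvd α β γ hαβ Q hvanish
  rwa [← hrep] at hdvd

lemma deg_one (l : MvPolynomial (Fin 2) ℝ) (hd : l.totalDegree ≤ 1)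
    (a w : Fin 2 → ℝ) (hla : eval a l = 0) (hlw : eval w l = 1) :
    l.totalDegree = 1 := by
  rcases Nat.lt_or_ge l.totalDegree 1 with h | h
  · exfalso
    have h0 : l.totalDegree = 0 := by omega
    have hC := eq_C_of_totalDegree_zero l h0
    rw [hC] at hla hlw
    rw [eval_C] at hla hlw
    rw [hla] at hlw
    exact one_ne_zero hlw.symm
  · omega

lemma l_ne_zero (l : MvPolynomial (Fin 2) ℝ) (w : Fin 2 → ℝ) (hlw : eval w l = 1) :
    l ≠ 0 := by
  intro hcon
  rw [hcon, map_zero] at hlw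
  exact one_ne_zero hlw.symm

lemma not_dvd_affine (l m : MvPolynomial (Fin 2) ℝ) (hl : l.totalDegree = 1)
    (hm : m.totalDegree = 1) (x : Fin 2 → ℝ) (hlx : eval x l = 0)
    (hmx : eval x m = 1) : ¬ (m ∣ l) := by
  rintro ⟨u, hu⟩
  have hl0 : l ≠ 0 := fun hcon => by rw [hcon] at hl; simp at hl
  have hm0 : m ≠ 0 := fun hcon => by rw [hcon] at hm; simp at hm
  have hu0 : u ≠ 0 := fun hcon => hl0 (by rw [hu, hcon, mul_zero])
  have hdeg := totalDegree_mul_eq' m u hm0 hu0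
  rw [← hu, hl, hm] at hdeg
  have hu_deg : u.totalDegree = 0 := by omega
  have hC := eq_C_of_totalDegree_zero u hu_deg
  have : eval x l = eval x m * eval x u := by rw [hu, map_mul]
  rw [hlx, hmx, one_mul] at this
  have hcz : coeff 0 u = 0 := by
    have h9 : eval x u = coeff 0 u := by conv_lhs => rw [hC, eval_C]
    rw [h9] at this
    exact this.symm
  exact hu0 (by rw [hC, hcz, C_0])

/-- On a triangle `K` with barycentric coordinates `λ₁, λ₂, λ₃`, if a
polynomial vector field `ψ ∈ P_k(K;ℝ²)` satisfies `div ψ = 0` on `K` and `ψ·n = 0` on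
`∂K`, then `ψ = curl q` for some `q ∈ λ₁λ₂λ₃ P_{k−2}(K)`, with `curl q = (−∂ᵧq, ∂ₓq)`. -/
theorem divfree_zero_normal_trace_is_curl (k : ℕ) (v₁ v₂ v₃ : Fin 2 → ℝ)
    (hind : AffineIndependent ℝ ![v₁, v₂, v₃])
    (K : Set (Fin 2 → ℝ)) (hK : K = convexHull ℝ {v₁, v₂, v₃})
    (l₁ l₂ l₃ : MvPolynomial (Fin 2) ℝ)
    (hl₁d : l₁.totalDegree ≤ 1) (hl₂d : l₂.totalDegree ≤ 1) (hl₃d : l₃.totalDegree ≤ 1)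
    (hl₁ : eval v₁ l₁ = 1 ∧ eval v₂ l₁ = 0 ∧ eval v₃ l₁ = 0)
    (hl₂ : eval v₁ l₂ = 0 ∧ eval v₂ l₂ = 1 ∧ eval v₃ l₂ = 0)
    (hl₃ : eval v₁ l₃ = 0 ∧ eval v₂ l₃ = 0 ∧ eval v₃ l₃ = 1)
    (ψ₁ ψ₂ : MvPolynomial (Fin 2) ℝ)
    (hdeg₁ : ψ₁.totalDegree ≤ k) (hdeg₂ : ψ₂.totalDegree ≤ k)
    (hdiv : ∀ x ∈ K, eval x (pderiv 0 ψ₁ + pderiv 1 ψ₂) = 0)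
    (hbc : ∀ a b : Fin 2 → ℝ,
      ((a, b) = (v₂, v₃) ∨ (a, b) = (v₃, v₁) ∨ (a, b) = (v₁, v₂)) →
      ∀ n : Fin 2 → ℝ, n 0 * (b 0 - a 0) + n 1 * (b 1 - a 1) = 0 →
      ∀ x ∈ segment ℝ a b, eval x ψ₁ * n 0 + eval x ψ₂ * n 1 = 0) :
    ∃ r : MvPolynomial (Fin 2) ℝ, r.totalDegree ≤ k - 2 ∧
      ψ₁ = -(pderiv 1 (l₁ * l₂ * l₃ * r)) ∧ ψ₂ = pderiv 0 (l₁ * l₂ * l₃ * r) := by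
  obtain ⟨h11, h12, h13⟩ := hl₁
  obtain ⟨h21, h22, h23l⟩ := hl₂
  obtain ⟨h31l, h32l, h33⟩ := hl₃
  -- distinct vertices
  have h23 : v₂ ≠ v₃ := by
    intro hcon
    have : (1 : Fin 3) = 2 := hind.injective (by simp [hcon])
    exact absurd this (by decide)
  have h31 : v₃ ≠ v₁ := by
    intro hcon
    have : (2 : Fin 3) = 0 := hind.injective (by simp [hcon])
    exact absurd this (by decide)
  have h12v : v₁ ≠ v₂ := by
    intro hcon
    have : (0 : Fin 3) = 1 := hind.injective (by simp [hcon])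
    exact absurd this (by decide)
  -- divergence is the zero polynomial
  have hspan : affineSpan ℝ ({v₁, v₂, v₃} : Set (Fin 2 → ℝ)) = ⊤ := by
    have hr : Set.range ![v₁, v₂, v₃] = ({v₁, v₂, v₃} : Set (Fin 2 → ℝ)) := by
      ext x
      constructor
      · rintro ⟨i, rfl⟩
        fin_cases i <;> simp
      · intro hx
        rcases hx with rfl | rfl | rfl
        exacts [⟨0, rfl⟩, ⟨1, rfl⟩, ⟨2, rfl⟩]
    rw [← hr, hind.affineSpan_eq_top_iff_card_eq_finrank_add_one]
    simp [Module.finrank_pi]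
  have hint : (interior K).Nonempty := by
    rw [hK]
    exact interior_convexHull_nonempty_iff_affineSpan_eq_top.mpr hspan
  obtain ⟨z, hz⟩ := hint
  obtain ⟨ε, hε, hball⟩ := Metric.isOpen_iff.mp isOpen_interior z hz
  have hD : pderiv 0 ψ₁ + pderiv 1 ψ₂ = 0 := by
    apply vanish_box _ z ε hε
    intro x hx
    apply hdiv
    have hxball : x ∈ Metric.ball z ε := by
      rw [Metric.mem_ball, dist_pi_lt_iff hε]
      intro i
      rw [Real.dist_eq]
      exact hx i
    exact interior_subset (hball hxball)
  -- construct the potential q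
  set q₁ := integ 0 ψ₂ with hq₁def
  set hh := pderiv 1 q₁ + ψ₁ with hhdef
  have hq₁0 : pderiv 0 q₁ = ψ₂ := pderiv_integ 0 ψ₂
  have hh0 : pderiv 0 hh = 0 := by
    rw [hhdef, map_add, pderiv_comm', hq₁0, add_comm]
    exact hD
  set q := q₁ - integ 1 hh with hqdef
  have hq0 : pderiv 0 q = ψ₂ := by
    rw [hqdef, map_sub, hq₁0,
      pderiv_integ_zero 1 0 (by decide) hh (support_pderiv_zero 0 hh hh0), sub_zero]
  have hq1 : pderiv 1 q = -ψ₁ := by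
    rw [hqdef, map_sub, pderiv_integ 1 hh, hhdef]
    ring
  have hqdeg : q.totalDegree ≤ k + 1 := by
    have d1 : q₁.totalDegree ≤ k + 1 := (totalDegree_integ 0 ψ₂).trans (by omega)
    have d2 : hh.totalDegree ≤ k := by
      refine (totalDegree_add _ _).trans ?_
      have d21 := totalDegree_pderiv_le 1 q₁
      exact max_le (by omega) hdeg₁
    have d3 : (integ 1 hh).totalDegree ≤ k + 1 := (totalDegree_integ 1 hh).trans (by omega)
    rw [hqdef]
    exact (totalDegree_sub _ _).trans (max_le d1 d3)
  -- q is constant on each edge line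
  have edge : ∀ a b : Fin 2 → ℝ,
      ((a, b) = (v₂, v₃) ∨ (a, b) = (v₃, v₁) ∨ (a, b) = (v₁, v₂)) →
      ∀ t : ℝ, eval (fun i => a i + t * (b i - a i)) q = eval a q := by
    intro a b hab
    set f : Fin 2 → Polynomial ℝ :=
      ![Polynomial.C (a 0) + Polynomial.C (b 0 - a 0) * Polynomial.X,
        Polynomial.C (a 1) + Polynomial.C (b 1 - a 1) * Polynomial.X] with hfdef
    have hf0 : f 0 = Polynomial.C (a 0) + Polynomial.C (b 0 - a 0) * Polynomial.X := rfl
    have hf1 : f 1 = Polynomial.C (a 1) + Polynomial.C (b 1 - a 1) * Polynomial.X := rfl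
    have hfe : ∀ t : ℝ, (fun i => Polynomial.eval t (f i))
        = fun i => a i + t * (b i - a i) := by
      intro t
      funext i
      fin_cases i
      · show Polynomial.eval t (f 0) = a 0 + t * (b 0 - a 0)
        rw [hf0]; simp; ring
      · show Polynomial.eval t (f 1) = a 1 + t * (b 1 - a 1)
        rw [hf1]; simp; ring
    have hval : ∀ t : ℝ, Polynomial.eval t (aeval f q)
        = eval (fun i => a i + t * (b i - a i)) q := by
      intro t
      rw [eval_aeval_poly, hfe t]
    have hder : Polynomial.derivative (aeval f q) = 0 := by
      rw [deriv_aeval, hq0, hq1, hf0, hf1]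
      have hd0 : Polynomial.derivative
          (Polynomial.C (a 0) + Polynomial.C (b 0 - a 0) * Polynomial.X)
          = Polynomial.C (b 0 - a 0) := by simp
      have hd1 : Polynomial.derivative
          (Polynomial.C (a 1) + Polynomial.C (b 1 - a 1) * Polynomial.X)
          = Polynomial.C (b 1 - a 1) := by simp
      rw [hd0, hd1]
      apply Polynomial.eq_zero_of_infinite_isRoot
      apply Set.Infinite.mono (s := Set.Ioo (0:ℝ) 1)
      · intro t ht
        simp only [Set.mem_setOf_eq, Polynomial.IsRoot, Polynomial.eval_add,
          Polynomial.eval_mul, Polynomial.eval_C, map_neg, Polynomial.eval_neg]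
        rw [eval_aeval_poly, eval_aeval_poly, hfe t]
        have hseg : (fun i => a i + t * (b i - a i)) ∈ segment ℝ a b := by
          rw [segment_eq_image']
          refine ⟨t, ⟨le_of_lt ht.1, le_of_lt ht.2⟩, ?_⟩
          funext i
          simp [Pi.add_apply, Pi.smul_apply]
        have hn := hbc a b hab ![-(b 1 - a 1), b 0 - a 0]
          (by show (-(b 1 - a 1)) * (b 0 - a 0) + (b 0 - a 0) * (b 1 - a 1) = 0; ring)
          _ hseg
        have hn' : eval (fun i => a i + t * (b i - a i)) ψ₁ * (-(b 1 - a 1))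
            + eval (fun i => a i + t * (b i - a i)) ψ₂ * (b 0 - a 0) = 0 := hn
        linarith [hn']
      · exact Set.Ioo_infinite one_pos
    have hCq := Polynomial.eq_C_of_natDegree_eq_zero
      (Polynomial.natDegree_eq_zero_of_derivative_eq_zero hder)
    intro t
    have h1 := hval t
    have h2 := hval 0
    rw [hCq, Polynomial.eval_C] at h1 h2
    have h3 : (fun i => a i + 0 * (b i - a i)) = a := by funext i; ring
    rw [h3] at h2
    rw [← h1, h2]
  -- corner values agree
  have hv32 : eval v₃ q = eval v₂ q := by
    have e := edge v₂ v₃ (Or.inl rfl) 1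
    rwa [show (fun i => v₂ i + 1 * (v₃ i - v₂ i)) = v₃ from by funext i; ring] at e
  have hv13 : eval v₁ q = eval v₃ q := by
    have e := edge v₃ v₁ (Or.inr (Or.inl rfl)) 1
    rwa [show (fun i => v₃ i + 1 * (v₁ i - v₃ i)) = v₁ from by funext i; ring] at e
  have hv21 : eval v₂ q = eval v₁ q := by
    have e := edge v₁ v₂ (Or.inr (Or.inr rfl)) 1
    rwa [show (fun i => v₁ i + 1 * (v₂ i - v₁ i)) = v₂ from by funext i; ring] at e
  set c := eval v₁ q with hcdef
  set q' := q - C c with hq'def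
  -- q' vanishes on each edge line
  have hline : ∀ a b : Fin 2 → ℝ,
      ((a, b) = (v₂, v₃) ∨ (a, b) = (v₃, v₁) ∨ (a, b) = (v₁, v₂)) →
      eval a q = c →
      ∀ t : ℝ, eval (fun i => a i + t * (b i - a i)) q' = 0 := by
    intro a b hab hac t
    rw [hq'def, map_sub, eval_C, edge a b hab t, hac, sub_self]
  -- divisibility by the three barycentric coordinates
  have hdvd₁ : l₁ ∣ q' :=
    dvd_line l₁ hl₁d v₂ v₃ v₁ h12 h13 h11 h23 q'
      (hline v₂ v₃ (Or.inl rfl) hv21)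
  have hdvd₂ : l₂ ∣ q' :=
    dvd_line l₂ hl₂d v₃ v₁ v₂ h23l h21 h22 h31 q'
      (hline v₃ v₁ (Or.inr (Or.inl rfl)) (hv32.trans hv21))
  have hdvd₃ : l₃ ∣ q' :=
    dvd_line l₃ hl₃d v₁ v₂ v₃ h31l h32l h33 h12v q'
      (hline v₁ v₂ (Or.inr (Or.inr rfl)) rfl)
  have hdeg₁' : l₁.totalDegree = 1 := deg_one l₁ hl₁d v₂ v₁ h12 h11
  have hdeg₂' : l₂.totalDegree = 1 := deg_one l₂ hl₂d v₁ v₂ h21 h22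
  have hdeg₃' : l₃.totalDegree = 1 := deg_one l₃ hl₃d v₁ v₃ h31l h33
  have hp₂ : Prime l₂ := affine_prime l₂ hdeg₂'
  have hp₃ : Prime l₃ := affine_prime l₃ hdeg₃'
  obtain ⟨s, hs⟩ := hdvd₁
  have h2s : l₂ ∣ s := by
    have hd : l₂ ∣ l₁ * s := hs ▸ hdvd₂
    rcases (hp₂.dvd_mul).mp hd with hcon | hok
    · exact absurd hcon (not_dvd_affine l₁ l₂ hdeg₁' hdeg₂' v₂ h12 h22)
    · exact hok
  obtain ⟨t2, ht2⟩ := h2s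
  have h3t : l₃ ∣ t2 := by
    have hd : l₃ ∣ l₁ * (l₂ * t2) := by rw [← ht2, ← hs]; exact hdvd₃
    rcases (hp₃.dvd_mul).mp hd with hcon | hok
    · exact absurd hcon (not_dvd_affine l₁ l₃ hdeg₁' hdeg₃' v₃ h13 h33)
    rcases (hp₃.dvd_mul).mp hok with hcon | hok2
    · exact absurd hcon (not_dvd_affine l₂ l₃ hdeg₂' hdeg₃' v₃ h23l h33)
    · exact hok2
  obtain ⟨r, hr⟩ := h3t
  have hq'eq : q' = l₁ * l₂ * l₃ * r := by rw [hs, ht2, hr]; ring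
  have hl₁ne : l₁ ≠ 0 := l_ne_zero l₁ v₁ h11
  have hl₂ne : l₂ ≠ 0 := l_ne_zero l₂ v₂ h22
  have hl₃ne : l₃ ≠ 0 := l_ne_zero l₃ v₃ h33
  refine ⟨r, ?_, ?_, ?_⟩
  · -- degree bound
    by_cases hr0 : r = 0
    · rw [hr0]
      simp
    · have h12m : (l₁ * l₂ : MvPolynomial (Fin 2) ℝ) ≠ 0 := mul_ne_zero hl₁ne hl₂ne
      have h123m : (l₁ * l₂ * l₃ : MvPolynomial (Fin 2) ℝ) ≠ 0 := mul_ne_zero h12m hl₃ne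
      have e1 := totalDegree_mul_eq' (l₁ * l₂ * l₃) r h123m hr0
      have e2 := totalDegree_mul_eq' (l₁ * l₂) l₃ h12m hl₃ne
      have e3 := totalDegree_mul_eq' l₁ l₂ hl₁ne hl₂ne
      have hq'deg : q'.totalDegree ≤ k + 1 := by
        rw [hq'def]
        exact (totalDegree_sub _ _).trans
          (max_le hqdeg (by rw [totalDegree_C]; omega))
      rw [hq'eq, e1, e2, e3, hdeg₁', hdeg₂', hdeg₃'] at hq'deg
      omega
  · -- ψ₁
    have hpd : pderiv 1 (l₁ * l₂ * l₃ * r) = pderiv 1 q' := by rw [hq'eq]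
    rw [hpd, hq'def, map_sub, pderiv_C, sub_zero, hq1, neg_neg]
  · -- ψ₂
    have hpd : pderiv 0 (l₁ * l₂ * l₃ * r) = pderiv 0 q' := by rw [hq'eq]
    rw [hpd, hq'def, map_sub, pderiv_C, sub_zero, hq0]
end

section
/- For the matrix Piola transform τ(x) = (1/det B) B τ̂(x̂) Bᵀ, the scalar quantity div div is invariant up to the Jacobian: div div τ (x) = (1/det B) · div̂ div̂ τ̂ (x̂); consequently div̂ div̂ τ̂ = 0 implies div div τ = 0. -/
open scoped BigOperators

open Matrix

open scoped BigOperators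

lemma fd_apply_comm {f : (Fin 2 → ℝ) → ℝ} (hf : ContDiff ℝ (⊤ : ℕ∞) f)
    (p v w : Fin 2 → ℝ) :
    fderiv ℝ (fun u => fderiv ℝ f u v) p w = fderiv ℝ (fderiv ℝ f) p w v := by
  have h1 : ContDiff ℝ (⊤ : ℕ∞) (fderiv ℝ f) := hf.fderiv_right (by simp)
  have h2 : (fun u => fderiv ℝ f u v)
      = (ContinuousLinearMap.apply ℝ ℝ v) ∘ (fderiv ℝ f) := rfl
  rw [h2, fderiv_comp p (ContinuousLinearMap.apply ℝ ℝ v).differentiableAt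
    (h1.differentiable (by simp) p)]
  simp

lemma fd_comp_affine (L : (Fin 2 → ℝ) →L[ℝ] (Fin 2 → ℝ)) (x₁ : Fin 2 → ℝ)
    {f : (Fin 2 → ℝ) → ℝ} (hf : ContDiff ℝ (⊤ : ℕ∞) f) (y : Fin 2 → ℝ) :
    fderiv ℝ (fun z => f (L (z - x₁))) y = (fderiv ℝ f (L (y - x₁))).comp L := by
  have hA : HasFDerivAt (fun z : Fin 2 → ℝ => L (z - x₁)) L y := by
    have h : (fun z : Fin 2 → ℝ => L (z - x₁)) = fun z => L z - L x₁ := by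
      funext z; simp
    rw [h]
    exact L.hasFDerivAt.sub_const (L x₁)
  exact (((hf.differentiable (by simp)) _).hasFDerivAt.comp y hA).fderiv

lemma fd2_comp_affine (L : (Fin 2 → ℝ) →L[ℝ] (Fin 2 → ℝ)) (x₁ : Fin 2 → ℝ)
    {f : (Fin 2 → ℝ) → ℝ} (hf : ContDiff ℝ (⊤ : ℕ∞) f) (x v w : Fin 2 → ℝ) :
    fderiv ℝ (fun y => fderiv ℝ (fun z => f (L (z - x₁))) y v) x w
      = fderiv ℝ (fderiv ℝ f) (L (x - x₁)) (L w) (L v) := by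
  have hg : ContDiff ℝ (⊤ : ℕ∞) (fun u => fderiv ℝ f u (L v)) :=
    (hf.fderiv_right (by simp)).clm_apply contDiff_const
  have h1 : (fun y => fderiv ℝ (fun z => f (L (z - x₁))) y v)
      = fun y => (fun u => fderiv ℝ f u (L v)) (L (y - x₁)) := by
    funext y; rw [fd_comp_affine L x₁ hf y]; rfl
  rw [h1, fd_comp_affine L x₁ hg x]
  show fderiv ℝ (fun u => fderiv ℝ f u (L v)) (L (x - x₁)) (L w) = _
  rw [fd_apply_comm hf (L (x - x₁)) (L v) (L w)]

lemma fd2_sum (g : Fin 2 → Fin 2 → (Fin 2 → ℝ) → ℝ)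
    (hsmooth : ∀ k l, ContDiff ℝ (⊤ : ℕ∞) (g k l))
    (a : Fin 2 → Fin 2 → ℝ) (p w v : Fin 2 → ℝ) :
    fderiv ℝ (fderiv ℝ (fun x => ∑ k, ∑ l, a k l * g k l x)) p w v
      = ∑ k, ∑ l, a k l * fderiv ℝ (fderiv ℝ (g k l)) p w v := by
  have hd : ∀ k l, Differentiable ℝ (g k l) := fun k l => (hsmooth k l).differentiable (by simp)
  have hd2 : ∀ k l, Differentiable ℝ (fderiv ℝ (g k l)) := fun k l =>
    ((hsmooth k l).fderiv_right (by simp) : ContDiff ℝ (⊤ : ℕ∞) _).differentiable (by simp)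
  have h1 : fderiv ℝ (fun x => ∑ k, ∑ l, a k l * g k l x)
      = fun u => ∑ k, ∑ l, a k l • fderiv ℝ (g k l) u := by
    funext u
    rw [fderiv_fun_sum (fun k _ => by
      exact Differentiable.differentiableAt (by
        apply Differentiable.fun_sum; intro l _; exact (hd k l).const_mul _))]
    refine Finset.sum_congr rfl fun k _ => ?_
    rw [fderiv_fun_sum (fun l _ => ((hd k l).differentiableAt).const_mul _)]
    exact Finset.sum_congr rfl fun l _ => fderiv_const_mul ((hd k l).differentiableAt) _
  rw [h1]
  rw [fderiv_fun_sum (fun k _ => by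
    apply Differentiable.differentiableAt
    apply Differentiable.fun_sum; intro l _; exact (hd2 k l).fun_const_smul _)]
  rw [ContinuousLinearMap.sum_apply, ContinuousLinearMap.sum_apply]
  refine Finset.sum_congr rfl fun k _ => ?_
  rw [fderiv_fun_sum (fun l _ => ((hd2 k l).differentiableAt).fun_const_smul _),
    ContinuousLinearMap.sum_apply, ContinuousLinearMap.sum_apply]
  refine Finset.sum_congr rfl fun l _ => ?_
  rw [fderiv_fun_const_smul ((hd2 k l).differentiableAt)]
  simp

lemma collapse (L : (Fin 2 → ℝ) →L[ℝ] (Fin 2 → ℝ)) (B : Matrix (Fin 2) (Fin 2) ℝ)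
    (hcol : ∀ m, (∑ i, B i m • L (Pi.single i 1)) = Pi.single m 1)
    (H : (Fin 2 → ℝ) →L[ℝ] (Fin 2 → ℝ) →L[ℝ] ℝ) (k l : Fin 2) :
    (∑ i, ∑ j, B i k * B j l * H (L (Pi.single j 1)) (L (Pi.single i 1)))
      = H (Pi.single l 1) (Pi.single k 1) := by
  have step1 : ∀ w : (Fin 2 → ℝ) →L[ℝ] ℝ,
      (∑ i, B i k * w (L (Pi.single i 1))) = w (Pi.single k 1) := by
    intro w
    rw [← hcol k, map_sum]
    simp
  have step2 : (∑ j, B j l • H (L (Pi.single j 1))) = H (Pi.single l 1) := by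
    rw [← hcol l, map_sum]
    simp
  rw [Finset.sum_comm]
  have h : ∀ j, (∑ i, B i k * B j l * H (L (Pi.single j 1)) (L (Pi.single i 1)))
      = B j l * (H (L (Pi.single j 1))) (Pi.single k 1) := by
    intro j
    rw [← step1 (H (L (Pi.single j 1))), Finset.mul_sum]
    exact Finset.sum_congr rfl fun i _ => by ring
  simp_rw [h]
  rw [← step2, ContinuousLinearMap.sum_apply]
  exact Finset.sum_congr rfl fun j _ => by simp

lemma sum4_swap (T : Fin 2 → Fin 2 → Fin 2 → Fin 2 → ℝ) :
    (∑ i, ∑ j, ∑ k, ∑ l, T i j k l) = ∑ k, ∑ l, ∑ i, ∑ j, T i j k l := by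
  calc (∑ i, ∑ j, ∑ k, ∑ l, T i j k l)
      = ∑ i, ∑ k, ∑ j, ∑ l, T i j k l :=
        Finset.sum_congr rfl fun i _ => Finset.sum_comm
    _ = ∑ k, ∑ i, ∑ j, ∑ l, T i j k l := Finset.sum_comm
    _ = ∑ k, ∑ i, ∑ l, ∑ j, T i j k l :=
        Finset.sum_congr rfl fun k _ => Finset.sum_congr rfl fun i _ => Finset.sum_comm
    _ = ∑ k, ∑ l, ∑ i, ∑ j, T i j k l :=
        Finset.sum_congr rfl fun k _ => Finset.sum_comm

/-- For the matrix Piola transform `τ(x) = (1/det B) B τ̂(x̂) Bᵀ` with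
`x = Bx̂ + x₁`, one has `div div τ (x) = (1/det B) · div̂ div̂ τ̂ (x̂)`, where
`div div τ = Σ_{i,j} ∂²τ_{ij}/∂x_i∂x_j`; consequently `div̂ div̂ τ̂ = 0` implies
`div div τ = 0`. -/
theorem piola_divdiv_transform
    (B : Matrix (Fin 2) (Fin 2) ℝ) (hB : IsUnit B.det) (x₁ : Fin 2 → ℝ)
    (τhat : (Fin 2 → ℝ) → Matrix (Fin 2) (Fin 2) ℝ)
    (hsmooth : ∀ i j, ContDiff ℝ (⊤ : ℕ∞) fun xhat => τhat xhat i j)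
    (hsym : ∀ xhat, (τhat xhat).IsSymm)
    (τ : (Fin 2 → ℝ) → Matrix (Fin 2) (Fin 2) ℝ)
    (hτ : ∀ x, τ x = B.det⁻¹ • (B * τhat (B⁻¹.mulVec (x - x₁)) * B.transpose)) :
    (∀ xhat : Fin 2 → ℝ,
      (∑ i, ∑ j, fderiv ℝ (fun y => fderiv ℝ (fun z => τ z i j) y (Pi.single i 1))
          (B.mulVec xhat + x₁) (Pi.single j 1)) =
        B.det⁻¹ *
          ∑ i, ∑ j, fderiv ℝ (fun yhat => fderiv ℝ (fun zhat => τhat zhat i j) yhat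
            (Pi.single i 1)) xhat (Pi.single j 1)) ∧
    ((∀ xhat : Fin 2 → ℝ,
        (∑ i, ∑ j, fderiv ℝ (fun yhat => fderiv ℝ (fun zhat => τhat zhat i j) yhat
          (Pi.single i 1)) xhat (Pi.single j 1)) = 0) →
      ∀ x : Fin 2 → ℝ,
        (∑ i, ∑ j, fderiv ℝ (fun y => fderiv ℝ (fun z => τ z i j) y (Pi.single i 1)) x
          (Pi.single j 1)) = 0) := by
  set L : (Fin 2 → ℝ) →L[ℝ] (Fin 2 → ℝ) :=
    LinearMap.toContinuousLinearMap (Matrix.mulVecLin B⁻¹) with hL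
  have hLapp : ∀ v, L v = B⁻¹.mulVec v := fun v => rfl
  have hLB : ∀ u, L (B.mulVec u) = u := by
    intro u
    rw [hLapp, Matrix.mulVec_mulVec, Matrix.nonsing_inv_mul B hB, Matrix.one_mulVec]
  have hcol : ∀ m, (∑ i, B i m • L (Pi.single i 1)) = Pi.single m 1 := by
    intro m
    have h1 : (∑ i, B i m • (Pi.single i 1 : Fin 2 → ℝ)) = B.mulVec (Pi.single m 1) := by
      funext n
      simp [Matrix.mulVec_single, Pi.single_apply]
    have h2 : (∑ i, B i m • L (Pi.single i 1)) = L (B.mulVec (Pi.single m 1)) := by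
      rw [← h1, map_sum]
      simp
    rw [h2, hLB]
  have hτfun : ∀ i j, (fun z => τ z i j)
      = fun z => (∑ k, ∑ l, (B.det⁻¹ * B i k * B j l) * τhat (L (z - x₁)) k l) := by
    intro i j
    funext z
    rw [hτ]
    simp only [Matrix.smul_apply, Matrix.mul_apply, Matrix.transpose_apply, smul_eq_mul,
      Finset.mul_sum, Finset.sum_mul, hLapp]
    rw [Finset.sum_comm]
    exact Finset.sum_congr rfl fun k _ => Finset.sum_congr rfl fun l _ => by ring
  -- key term computation
  have key : ∀ (i j : Fin 2) (x : Fin 2 → ℝ),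
      fderiv ℝ (fun y => fderiv ℝ (fun z => τ z i j) y (Pi.single i 1)) x (Pi.single j 1)
        = ∑ k, ∑ l, (B.det⁻¹ * B i k * B j l) *
            fderiv ℝ (fderiv ℝ (fun u => τhat u k l)) (L (x - x₁))
              (L (Pi.single j 1)) (L (Pi.single i 1)) := by
    intro i j x
    have hψ : ContDiff ℝ (⊤ : ℕ∞) (fun u => ∑ k, ∑ l, (B.det⁻¹ * B i k * B j l) * τhat u k l) := by
      apply ContDiff.sum; intro k _
      apply ContDiff.sum; intro l _
      exact contDiff_const.mul (hsmooth k l)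
    simp_rw [hτfun i j]
    rw [fd2_comp_affine L x₁ hψ x (Pi.single i 1) (Pi.single j 1)]
    exact fd2_sum (fun k l u => τhat u k l) hsmooth _ _ _ _
  -- commute application on the hat side
  have hhat : ∀ (i j : Fin 2) (xhat : Fin 2 → ℝ),
      fderiv ℝ (fun yhat => fderiv ℝ (fun zhat => τhat zhat i j) yhat (Pi.single i 1)) xhat
          (Pi.single j 1)
        = fderiv ℝ (fderiv ℝ (fun u => τhat u i j)) xhat (Pi.single j 1) (Pi.single i 1) :=
    fun i j xhat => fd_apply_comm (hsmooth i j) xhat _ _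
  have main : ∀ xhat : Fin 2 → ℝ,
      (∑ i, ∑ j, fderiv ℝ (fun y => fderiv ℝ (fun z => τ z i j) y (Pi.single i 1))
          (B.mulVec xhat + x₁) (Pi.single j 1)) =
        B.det⁻¹ *
          ∑ i, ∑ j, fderiv ℝ (fun yhat => fderiv ℝ (fun zhat => τhat zhat i j) yhat
            (Pi.single i 1)) xhat (Pi.single j 1) := by
    intro xhat
    have hpt : L (B.mulVec xhat + x₁ - x₁) = xhat := by
      rw [add_sub_cancel_right, hLB]
    simp_rw [key, hpt, hhat]
    have hkl : ∀ k l, (∑ i, ∑ j, B i k * B j l *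
        fderiv ℝ (fderiv ℝ (fun u => τhat u k l)) xhat
          (L (Pi.single j 1)) (L (Pi.single i 1)))
        = fderiv ℝ (fderiv ℝ (fun u => τhat u k l)) xhat (Pi.single l 1) (Pi.single k 1) := by
      intro k l
      exact collapse L B hcol (fderiv ℝ (fderiv ℝ (fun u => τhat u k l)) xhat) k l
    calc (∑ i, ∑ j, ∑ k, ∑ l, (B.det⁻¹ * B i k * B j l) *
          fderiv ℝ (fderiv ℝ (fun u => τhat u k l)) xhat
            (L (Pi.single j 1)) (L (Pi.single i 1)))
        = B.det⁻¹ * ∑ k, ∑ l, ∑ i, ∑ j, B i k * B j l *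
            fderiv ℝ (fderiv ℝ (fun u => τhat u k l)) xhat
              (L (Pi.single j 1)) (L (Pi.single i 1)) := by
          rw [sum4_swap]
          simp only [Finset.mul_sum]
          refine Finset.sum_congr rfl fun k _ => Finset.sum_congr rfl fun l _ =>
            Finset.sum_congr rfl fun i _ => Finset.sum_congr rfl fun j _ => by ring
      _ = B.det⁻¹ * ∑ k, ∑ l,
            fderiv ℝ (fderiv ℝ (fun u => τhat u k l)) xhat (Pi.single l 1) (Pi.single k 1) := by
          simp_rw [hkl]
      _ = B.det⁻¹ * ∑ i, ∑ j,
            fderiv ℝ (fderiv ℝ (fun u => τhat u i j)) xhat (Pi.single j 1) (Pi.single i 1) := rfl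
  refine ⟨main, fun hzero x => ?_⟩
  have hx : B.mulVec (B⁻¹.mulVec (x - x₁)) + x₁ = x := by
    rw [Matrix.mulVec_mulVec, Matrix.mul_nonsing_inv B hB, Matrix.one_mulVec,
      sub_add_cancel]
  have := main (B⁻¹.mulVec (x - x₁))
  rw [hx, hzero] at this
  rw [this, mul_zero]
end
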